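/- Let q>0 with q(2s−1) < 2s+1, λ>0, and f₁, f₂ ∈ L^∞(Ω). Let u, v ∈ X₀(Ω) ∩ 𝒞 be weak solutions of u + λ((−Δ)^s u − u^{-q}) = f₁ and v + λ((−Δ)^s v − v^{-q}) = f₂ respectively (with u = v = 0 in ℝⁿ∖Ω). Then ‖u − v‖_{L^∞(Ω)} ≤ ‖f₁ − f₂‖_{L^∞(Ω)}; in other words, the operator L(u) := (−Δ)^s u − u^{-q} is m-accretive in L^∞(Ω). -/

import Mathlib

open MeasureTheory Set Filter
open scoped ENNReal RealInnerProductSpace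

noncomputable section

/-- Euclidean space ℝⁿ. -/
abbrev Eu (n : ℕ) : Type := EuclideanSpace ℝ (Fin n)

/-- The normalizing constant `C_n^s = π^{-n/2} 2^{2s-1} s Γ((n+2s)/2)/Γ(1-s)`. -/
def Cns (n : ℕ) (s : ℝ) : ℝ :=
  Real.pi ^ (-(n : ℝ) / 2) * (2 : ℝ) ^ (2 * s - 1) * s *
    Real.Gamma (((n : ℝ) + 2 * s) / 2) / Real.Gamma (1 - s)

/-- `Q = ℝ²ⁿ ∖ ((ℝⁿ∖Ω) × (ℝⁿ∖Ω))`. -/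
def Qset {n : ℕ} (Ω : Set (Eu n)) : Set (Eu n × Eu n) := (Ωᶜ ×ˢ Ωᶜ)ᶜ

/-- The Gagliardo kernel `(u(x)-u(y))(v(x)-v(y))/|x-y|^{n+2s}`. -/
def gKer {n : ℕ} (s : ℝ) (u v : Eu n → ℝ) (p : Eu n × Eu n) : ℝ :=
  (u p.1 - u p.2) * (v p.1 - v p.2) / dist p.1 p.2 ^ ((n : ℝ) + 2 * s)

/-- The bilinear form `E(u,v) = C_n^s ∫∫_Q (u(x)-u(y))(v(x)-v(y))/|x-y|^{n+2s}`. -/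
def bilinE {n : ℕ} (s : ℝ) (Ω : Set (Eu n)) (u v : Eu n → ℝ) : ℝ :=
  Cns n s * ∫ p in Qset Ω, gKer s u v p

/-- `‖u‖²_{X₀(Ω)}`. -/
def normX0sq {n : ℕ} (s : ℝ) (Ω : Set (Eu n)) (u : Eu n → ℝ) : ℝ := bilinE s Ω u u

/-- `‖u‖_{X₀(Ω)}`. -/
def normX0 {n : ℕ} (s : ℝ) (Ω : Set (Eu n)) (u : Eu n → ℝ) : ℝ :=
  Real.sqrt (normX0sq s Ω u)

/-- `u ∈ X₀(Ω)`: measurable, vanishing a.e. outside `Ω`, square integrable on `Ω`,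
with finite Gagliardo energy. -/
def MemX0 {n : ℕ} (s : ℝ) (Ω : Set (Eu n)) (u : Eu n → ℝ) : Prop :=
  Measurable u ∧ (∀ᵐ x : Eu n, x ∉ Ω → u x = 0) ∧
    MemLp u 2 (volume.restrict Ω) ∧ IntegrableOn (gKer s u u) (Qset Ω)

/-- `Ω` has `C²` boundary: near every boundary point, `Ω` is given by a `C²` local
defining function with nonvanishing differential. -/
def HasC2Boundary {n : ℕ} (Ω : Set (Eu n)) : Prop :=
  ∀ x ∈ frontier Ω, ∃ U : Set (Eu n), IsOpen U ∧ x ∈ U ∧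
    ∃ g : Eu n → ℝ, ContDiff ℝ 2 g ∧ (∀ y ∈ U, (y ∈ Ω ↔ g y < 0)) ∧
      ∀ y ∈ U ∩ frontier Ω, fderiv ℝ g y ≠ 0

/-- Bounded domain (open, connected, nonempty) with `C²` boundary. -/
def GoodDomain {n : ℕ} (Ω : Set (Eu n)) : Prop :=
  IsOpen Ω ∧ Bornology.IsBounded Ω ∧ IsConnected Ω ∧ HasC2Boundary Ω

/-- `δ(x) = dist(x, ∂Ω)`. -/
def bdry {n : ℕ} (Ω : Set (Eu n)) (x : Eu n) : ℝ := Metric.infDist x (frontier Ω)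

/-- `g ∈ L^∞(Ω)`. -/
def MemLinfty {n : ℕ} (Ω : Set (Eu n)) (g : Eu n → ℝ) : Prop :=
  Measurable g ∧ ∃ M : ℝ, ∀ᵐ x ∂(volume.restrict Ω), |g x| ≤ M

/-- `ess inf_K u > 0` for every compact `K ⊆ Ω`. -/
def PosOnCompacts {n : ℕ} (Ω : Set (Eu n)) (u : Eu n → ℝ) : Prop :=
  ∀ K : Set (Eu n), IsCompact K → K ⊆ Ω →
    ∃ c : ℝ, 0 < c ∧ ∀ᵐ x ∂(volume.restrict K), c ≤ u x

/-- The conical shell `𝒞` (depending on `q`, `s` and a fixed `r > diam Ω`). -/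
def InCone {n : ℕ} (s q r : ℝ) (Ω : Set (Eu n)) (v : Eu n → ℝ) : Prop :=
  MemLinfty Ω v ∧ ∃ k₁ k₂ : ℝ, 0 < k₁ ∧ 0 < k₂ ∧
    ∀ᵐ x ∂(volume.restrict Ω),
      (q < 1 → k₁ * bdry Ω x ^ s ≤ v x ∧ v x ≤ k₂ * bdry Ω x ^ s) ∧
      (q = 1 →
        k₁ * (bdry Ω x ^ s * Real.sqrt (Real.log (r / bdry Ω x ^ s))) ≤ v x ∧
        v x ≤ k₂ * (bdry Ω x ^ s * Real.sqrt (Real.log (r / bdry Ω x ^ s)))) ∧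
      (1 < q →
        k₁ * bdry Ω x ^ (2 * s / (q + 1)) ≤ v x ∧
        v x ≤ k₂ * bdry Ω x ^ (2 * s / (q + 1)))

/-- Weak solution of `(S)`: `u + λ((−Δ)^s u − u^{-q}) = g` in `Ω`, `u = 0` outside `Ω`. -/
def IsWeakSolS {n : ℕ} (s q lam : ℝ) (Ω : Set (Eu n)) (g u : Eu n → ℝ) : Prop :=
  MemX0 s Ω u ∧ PosOnCompacts Ω u ∧
    ∀ φ : Eu n → ℝ, MemX0 s Ω φ →
      IntegrableOn (fun x => u x ^ (-q) * φ x) Ω ∧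
      (∫ x in Ω, u x * φ x) + lam * (bilinE s Ω u φ - ∫ x in Ω, u x ^ (-q) * φ x) =
        ∫ x in Ω, g x * φ x

/-- `u ∈ C^α(ℝⁿ)`. -/
def HolderCα {n : ℕ} (α : ℝ) (u : Eu n → ℝ) : Prop :=
  ∃ C : ℝ, 0 < C ∧ ∀ x y : Eu n, |u x - u y| ≤ C * dist x y ^ α

/-- Hölder regularity with exponent `α = s` if `q<1`, `α = s-ε` (any small `ε>0`) if `q=1`,
and `α = 2s/(q+1)` if `q>1`. -/
def RegAlpha {n : ℕ} (s q : ℝ) (u : Eu n → ℝ) : Prop :=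
  (q < 1 → HolderCα s u) ∧
  (q = 1 → ∃ ε₀ : ℝ, 0 < ε₀ ∧ ∀ ε : ℝ, 0 < ε → ε < ε₀ → HolderCα (s - ε) u) ∧
  (1 < q → HolderCα (2 * s / (q + 1)) u)

/-! Test the difference of the two weak formulations with `φ = (u - v - M)⁺`, where `M` bounds
`f₁ - f₂`. The Gagliardo term `E(u - v, φ)` is nonnegative because `φ` is a nondecreasing function
of `u - v`, and the singular term has a sign because `t ↦ t^{-q}` is decreasing on `(0, ∞)` while
`φ > 0` forces `u > v > 0`. What remains is `∫ (u - v - M) φ = ∫ φ² ≤ 0`, so `u - v ≤ M` a.e.;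
exchanging `u` and `v` gives the bound for `|u - v|`. -/

lemma IsOpen.isSigmaCompact {X : Type*} [TopologicalSpace X] [LocallyCompactSpace X]
    [SecondCountableTopology X] {U : Set X} (hU : IsOpen U) : IsSigmaCompact U :=
  have := hU.locallyCompactSpace
  isSigmaCompact_iff_sigmaCompactSpace.2 inferInstance

lemma IsSigmaCompact.ae_restrict_of_forall_isCompact {X : Type*} [TopologicalSpace X]
    [MeasurableSpace X] {μ : Measure X} {U : Set X} {p : X → Prop} (hU : IsSigmaCompact U)
    (h : ∀ K, IsCompact K → K ⊆ U → ∀ᵐ x ∂μ.restrict K, p x) : ∀ᵐ x ∂μ.restrict U, p x := by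
  obtain ⟨K, hK, rfl⟩ := hU
  exact (ae_restrict_iUnion_iff K p).2 fun i => h _ (hK i) (subset_iUnion K i)

lemma eLpNorm_top_le_of_forall_ae_norm_le {α E F : Type*} [MeasurableSpace α] {μ : Measure α}
    [NormedAddCommGroup E] [NormedAddCommGroup F] {f : α → E} {g : α → F}
    (hg : AEStronglyMeasurable g μ)
    (h : ∀ M : ℝ, 0 ≤ M → (∀ᵐ x ∂μ, ‖g x‖ ≤ M) → ∀ᵐ x ∂μ, ‖f x‖ ≤ M) :
    eLpNorm f ⊤ μ ≤ eLpNorm g ⊤ μ := by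
  by_cases hfin : eLpNorm g ⊤ μ = ⊤
  · rw [hfin]
    exact le_top
  have hgm : MemLp g ⊤ μ := ⟨hg, lt_top_iff_ne_top.2 hfin⟩
  calc eLpNorm f ⊤ μ ≤ ENNReal.ofReal (lpNorm g ⊤ μ) := by
        rw [eLpNorm_exponent_top]
        exact eLpNormEssSup_le_of_ae_bound (h _ lpNorm_nonneg (ae_le_lpNorm_exponent_top hgm))
    _ = eLpNorm g ⊤ μ := ofReal_lpNorm hgm

lemma ae_le_of_integral_mul_max_sub_nonpos {α : Type*} [MeasurableSpace α] {μ : Measure α}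
    {w : α → ℝ} {M : ℝ} (hi : Integrable (fun x => (w x - M) * max (w x - M) 0) μ)
    (h : ∫ x, (w x - M) * max (w x - M) 0 ∂μ ≤ 0) : ∀ᵐ x ∂μ, w x ≤ M := by
  have hpos : ∀ a : ℝ, 0 ≤ a * max a 0 := fun a => by
    rcases le_total a 0 with ha | ha
    · simp [max_eq_right ha]
    · simpa [max_eq_left ha] using mul_self_nonneg a
  have hzero := (integral_eq_zero_iff_of_nonneg_ae (ae_of_all _ fun x => hpos _) hi).1
    (le_antisymm h (integral_nonneg fun x => hpos _))
  filter_upwards [hzero] with x hx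
  by_contra! hlt
  have : 0 < (w x - M) * max (w x - M) 0 :=
    mul_pos (sub_pos.2 hlt) (lt_max_of_lt_left (sub_pos.2 hlt))
  exact this.ne' hx

variable {n : ℕ} {s : ℝ} {Ω : Set (Eu n)}

lemma Cns_nonneg (hs0 : 0 ≤ s) (hs1 : s < 1) : 0 ≤ Cns n s := by
  have := Real.Gamma_pos_of_pos (sub_pos.2 hs1)
  have := Real.Gamma_nonneg_of_nonneg (by positivity : 0 ≤ ((n : ℝ) + 2 * s) / 2)
  unfold Cns
  positivity

lemma measurable_gKer {u v : Eu n → ℝ} (hu : Measurable u) (hv : Measurable v) :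
    Measurable (gKer s u v) :=
  (((hu.comp measurable_fst).sub (hu.comp measurable_snd)).mul
    ((hv.comp measurable_fst).sub (hv.comp measurable_snd))).div
    ((measurable_fst.dist measurable_snd).pow_const _)

lemma gKer_self_nonneg (u : Eu n → ℝ) (p : Eu n × Eu n) : 0 ≤ gKer s u u p :=
  div_nonneg (mul_self_nonneg _) (Real.rpow_nonneg dist_nonneg _)

lemma abs_gKer_le (u v : Eu n → ℝ) (p : Eu n × Eu n) :
    |gKer s u v p| ≤ (gKer s u u p + gKer s v v p) / 2 := by
  set a := u p.1 - u p.2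
  set b := v p.1 - v p.2
  have hd : 0 ≤ dist p.1 p.2 ^ ((n : ℝ) + 2 * s) := Real.rpow_nonneg dist_nonneg _
  have hab : |a * b| ≤ (a * a + b * b) / 2 := by
    rw [abs_mul]
    nlinarith [sq_nonneg (|a| - |b|), abs_mul_abs_self a, abs_mul_abs_self b]
  calc |gKer s u v p| = |a * b| / dist p.1 p.2 ^ ((n : ℝ) + 2 * s) := by
        rw [gKer, abs_div, abs_of_nonneg hd]
    _ ≤ (a * a + b * b) / 2 / dist p.1 p.2 ^ ((n : ℝ) + 2 * s) :=
        div_le_div_of_nonneg_right hab hd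
    _ = (gKer s u u p + gKer s v v p) / 2 := by simp only [gKer, a, b]; ring

lemma gKer_sub_left (u v w : Eu n → ℝ) (p : Eu n × Eu n) :
    gKer s (fun x => u x - v x) w p = gKer s u w p - gKer s v w p := by
  simp only [gKer]; ring

lemma gKer_sub_right (u v w : Eu n → ℝ) (p : Eu n × Eu n) :
    gKer s w (fun x => u x - v x) p = gKer s w u p - gKer s w v p := by
  simp only [gKer]; ring

lemma gKer_nonneg_of_monotone {T : ℝ → ℝ} (hT : Monotone T) (w : Eu n → ℝ) (p : Eu n × Eu n) :
    0 ≤ gKer s w (fun x => T (w x)) p := by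
  refine div_nonneg ?_ (Real.rpow_nonneg dist_nonneg _)
  rcases le_total (w p.1) (w p.2) with h | h
  · exact mul_nonneg_of_nonpos_of_nonpos (sub_nonpos.2 h) (sub_nonpos.2 (hT h))
  · exact mul_nonneg (sub_nonneg.2 h) (sub_nonneg.2 (hT h))

lemma MemX0.integrableOn_gKer {u v : Eu n → ℝ} (hu : MemX0 s Ω u) (hv : MemX0 s Ω v) :
    IntegrableOn (gKer s u v) (Qset Ω) :=
  ((hu.2.2.2.add hv.2.2.2).div_const 2).mono' (measurable_gKer hu.1 hv.1).aestronglyMeasurable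
    (ae_of_all _ fun p => (Real.norm_eq_abs _).trans_le (abs_gKer_le u v p))

lemma MemX0.sub {u v : Eu n → ℝ} (hu : MemX0 s Ω u) (hv : MemX0 s Ω v) :
    MemX0 s Ω (fun x => u x - v x) := by
  refine ⟨hu.1.sub hv.1, ?_, hu.2.2.1.sub hv.2.2.1, ?_⟩
  · filter_upwards [hu.2.1, hv.2.1] with x hux hvx hx
    rw [hux hx, hvx hx, sub_self]
  · have : gKer s (fun x => u x - v x) (fun x => u x - v x) =
        fun p => (gKer s u u p - gKer s u v p) - (gKer s v u p - gKer s v v p) := by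
      funext p
      rw [gKer_sub_left, gKer_sub_right, gKer_sub_right]
    rw [this]
    exact ((hu.integrableOn_gKer hu).sub (hu.integrableOn_gKer hv)).sub
      ((hv.integrableOn_gKer hu).sub (hv.integrableOn_gKer hv))

lemma MemX0.comp_lipschitzWith {w : Eu n → ℝ} {T : ℝ → ℝ} (hw : MemX0 s Ω w)
    (hT : LipschitzWith 1 T) (hT0 : T 0 = 0) : MemX0 s Ω (fun x => T (w x)) := by
  have hTw : ∀ a b, |T a - T b| ≤ |a - b| := fun a b => by
    simpa [Real.dist_eq] using hT.dist_le_mul a b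
  have hm : Measurable fun x => T (w x) := hT.continuous.measurable.comp hw.1
  refine ⟨hm, ?_, ?_, ?_⟩
  · filter_upwards [hw.2.1] with x hx hxΩ
    rw [hx hxΩ, hT0]
  · refine hw.2.2.1.of_le hm.aestronglyMeasurable (ae_of_all _ fun x => ?_)
    simpa [hT0] using hTw (w x) 0
  · refine hw.2.2.2.mono' (measurable_gKer hm hm).aestronglyMeasurable (ae_of_all _ fun p => ?_)
    rw [Real.norm_eq_abs, abs_of_nonneg (gKer_self_nonneg _ p)]
    refine div_le_div_of_nonneg_right ?_ (Real.rpow_nonneg dist_nonneg _)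
    rw [← abs_mul_abs_self, ← abs_mul_abs_self (w p.1 - w p.2)]
    exact mul_self_le_mul_self (abs_nonneg _) (hTw _ _)

lemma MemX0.max_sub_const {w : Eu n → ℝ} {M : ℝ} (hw : MemX0 s Ω w) (hM : 0 ≤ M) :
    MemX0 s Ω (fun x => max (w x - M) 0) :=
  hw.comp_lipschitzWith (LipschitzWith.of_dist_le_mul fun a b => by
    simpa [Real.dist_eq] using abs_max_sub_max_le_abs (a - M) (b - M) 0) (by simp [hM])

lemma bilinE_sub_left {u v w : Eu n → ℝ} (hu : MemX0 s Ω u) (hv : MemX0 s Ω v)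
    (hw : MemX0 s Ω w) :
    bilinE s Ω (fun x => u x - v x) w = bilinE s Ω u w - bilinE s Ω v w := by
  simp only [bilinE, gKer_sub_left]
  rw [integral_sub (hu.integrableOn_gKer hw) (hv.integrableOn_gKer hw), mul_sub]

lemma bilinE_nonneg_of_monotone (hs0 : 0 ≤ s) (hs1 : s < 1) {T : ℝ → ℝ} (hT : Monotone T)
    (w : Eu n → ℝ) : 0 ≤ bilinE s Ω w (fun x => T (w x)) :=
  mul_nonneg (Cns_nonneg hs0 hs1) (integral_nonneg fun p => gKer_nonneg_of_monotone hT w p)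

lemma PosOnCompacts.ae_pos {u : Eu n → ℝ} (hu : PosOnCompacts Ω u) (hΩ : IsOpen Ω) :
    ∀ᵐ x ∂volume.restrict Ω, 0 < u x :=
  hΩ.isSigmaCompact.ae_restrict_of_forall_isCompact fun K hK hKΩ => by
    obtain ⟨c, hc, hcu⟩ := hu K hK hKΩ
    exact hcu.mono fun x hx => hc.trans_le hx

lemma MemLinfty.integrableOn_mul {f φ : Eu n → ℝ} (hf : MemLinfty Ω f) (hφ : IntegrableOn φ Ω) :
    IntegrableOn (fun x => f x * φ x) Ω := by
  obtain ⟨hfm, M, hM⟩ := hf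
  exact hφ.bdd_mul hfm.aestronglyMeasurable (hM.mono fun x hx => by rwa [Real.norm_eq_abs])

lemma IsWeakSolS.ae_sub_le {q lam M : ℝ} {f₁ f₂ u v : Eu n → ℝ}
    (hs0 : 0 ≤ s) (hs1 : s < 1) (hq : 0 ≤ q) (hlam : 0 ≤ lam)
    (hΩo : IsOpen Ω) (hΩb : Bornology.IsBounded Ω) (hf₁ : MemLinfty Ω f₁) (hf₂ : MemLinfty Ω f₂)
    (hu : IsWeakSolS s q lam Ω f₁ u) (hv : IsWeakSolS s q lam Ω f₂ v) (hM : 0 ≤ M)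
    (hfM : ∀ᵐ x ∂volume.restrict Ω, f₁ x - f₂ x ≤ M) :
    ∀ᵐ x ∂volume.restrict Ω, u x - v x ≤ M := by
  have : IsFiniteMeasure (volume.restrict Ω) := isFiniteMeasure_restrict.2 hΩb.measure_lt_top.ne
  set φ : Eu n → ℝ := fun x => max (u x - v x - M) 0
  have hφ : MemX0 s Ω φ := (hu.1.sub hv.1).max_sub_const hM
  have hφ0 : ∀ x, 0 ≤ φ x := fun x => le_max_right _ _
  obtain ⟨hIu, hEu⟩ := hu.2.2 φ hφ
  obtain ⟨hIv, hEv⟩ := hv.2.2 φ hφ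
  have hφ1 : Integrable φ (volume.restrict Ω) := hφ.2.2.1.integrable one_le_two
  have hf₁φ := hf₁.integrableOn_mul hφ1
  have hf₂φ := hf₂.integrableOn_mul hφ1
  have huφ : Integrable (fun x => u x * φ x) (volume.restrict Ω) :=
    hu.1.2.2.1.integrable_mul hφ.2.2.1
  have hvφ : Integrable (fun x => v x * φ x) (volume.restrict Ω) :=
    hv.1.2.2.1.integrable_mul hφ.2.2.1
  have energy : 0 ≤ bilinE s Ω u φ - bilinE s Ω v φ := by
    rw [← bilinE_sub_left hu.1 hv.1 hφ]
    exact bilinE_nonneg_of_monotone (T := fun t => max (t - M) 0) hs0 hs1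
      (fun a b hab => max_le_max (sub_le_sub_right hab M) le_rfl) _
  have singular : ∫ x in Ω, u x ^ (-q) * φ x ≤ ∫ x in Ω, v x ^ (-q) * φ x := by
    refine integral_mono_ae hIu hIv ?_
    filter_upwards [hv.2.1.ae_pos hΩo] with x hvx
    rcases le_or_gt (u x - v x - M) 0 with h | h
    · simp [φ, max_eq_right h]
    · exact mul_le_mul_of_nonneg_right
        (Real.rpow_le_rpow_of_nonpos hvx (by linarith) (by linarith)) (hφ0 x)
  have data : (∫ x in Ω, f₁ x * φ x) - ∫ x in Ω, f₂ x * φ x ≤ ∫ x in Ω, M * φ x := by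
    rw [← integral_sub hf₁φ hf₂φ]
    refine integral_mono_ae (hf₁φ.sub hf₂φ) (hφ1.const_mul M) ?_
    filter_upwards [hfM] with x hx
    rw [← sub_mul]
    exact mul_le_mul_of_nonneg_right hx (hφ0 x)
  have hsplit : (fun x => (u x - v x - M) * φ x) = fun x => u x * φ x - v x * φ x - M * φ x := by
    funext x; ring
  refine ae_le_of_integral_mul_max_sub_nonpos (w := fun x => u x - v x) ?_ ?_
  · exact hsplit ▸ (huφ.sub hvφ).sub (hφ1.const_mul M)
  · change ∫ x in Ω, (u x - v x - M) * φ x ≤ 0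
    rw [hsplit, integral_sub (f := fun x => u x * φ x - v x * φ x) (huφ.sub hvφ) (hφ1.const_mul M),
      integral_sub huφ hvφ]
    linarith [mul_nonneg hlam energy, mul_nonneg hlam (sub_nonneg.2 singular)]

theorem statement_7_general
    {n : ℕ} {s : ℝ} (hs0 : 0 < s) (hs1 : s < 1)
    {Ω : Set (Eu n)} (hΩ : GoodDomain Ω)
    {q lam : ℝ} (hq : 0 < q) (hlam : 0 < lam)
    {f₁ f₂ : Eu n → ℝ} (hf₁ : MemLinfty Ω f₁) (hf₂ : MemLinfty Ω f₂)
    {u v : Eu n → ℝ}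
    (hu : IsWeakSolS s q lam Ω f₁ u)
    (hv : IsWeakSolS s q lam Ω f₂ v) :
    eLpNorm (fun x => u x - v x) ⊤ (volume.restrict Ω) ≤
      eLpNorm (fun x => f₁ x - f₂ x) ⊤ (volume.restrict Ω) := by
  obtain ⟨hΩo, hΩb, -, -⟩ := hΩ
  refine eLpNorm_top_le_of_forall_ae_norm_le (hf₁.1.sub hf₂.1).aestronglyMeasurable
    fun M hM hf => ?_
  have huv := hu.ae_sub_le hs0.le hs1 hq.le hlam.le hΩo hΩb hf₁ hf₂ hv hM <|
    hf.mono fun x hx => (le_abs_self _).trans hx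
  have hvu := hv.ae_sub_le hs0.le hs1 hq.le hlam.le hΩo hΩb hf₂ hf₁ hu hM <|
    hf.mono fun x hx => (le_abs_self _).trans ((abs_sub_comm _ _).trans_le hx)
  filter_upwards [huv, hvu] with x huv hvu
  rw [Real.norm_eq_abs, abs_le]
  constructor <;> linarith

/-- `L^∞` contraction (m-accretivity of `L(u) = (−Δ)^s u − u^{-q}`) for the
stationary problem. -/
theorem statement_7
    {n : ℕ} {s : ℝ} (hs0 : 0 < s) (hs1 : s < 1) (hns : 2 * s < (n : ℝ))
    {Ω : Set (Eu n)} (hΩ : GoodDomain Ω) {r : ℝ} (hr : Metric.diam Ω < r)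
    {q lam : ℝ} (hq : 0 < q) (hqs : q * (2 * s - 1) < 2 * s + 1) (hlam : 0 < lam)
    {f₁ f₂ : Eu n → ℝ} (hf₁ : MemLinfty Ω f₁) (hf₂ : MemLinfty Ω f₂)
    {u v : Eu n → ℝ}
    (hu : IsWeakSolS s q lam Ω f₁ u) (hucone : InCone s q r Ω u)
    (hv : IsWeakSolS s q lam Ω f₂ v) (hvcone : InCone s q r Ω v) :
    eLpNorm (fun x => u x - v x) ⊤ (volume.restrict Ω) ≤
      eLpNorm (fun x => f₁ x - f₂ x) ⊤ (volume.restrict Ω) :=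
  statement_7_general hs0 hs1 hΩ hq hlam hf₁ hf₂ hu hv
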